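/- arXiv:2307.06846 — 3 statements merged into one kernel-verified Lean document; each statement's English description precedes it below -/
import Mathlib

section
/- The sequent Φ = {νx.φ, νy.ψ} is valid: the disjunction νx.φ ∨ νy.ψ holds at every state of every Kripke model. -/
set_option linter.unusedVariables false

/-! ## Formulas of the modal μ-calculus -/

inductive Formula : Type
  | prop  : ℕ → Formula
  | nprop : ℕ → Formula
  | var   : ℕ → Formula
  | or    : Formula → Formula → Formula
  | and   : Formula → Formula → Formula
  | dia   : Formula → Formula
  | box   : Formula → Formula
  | mu    : ℕ → Formula → Formula
  | nu    : ℕ → Formula → Formula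
  deriving DecidableEq

namespace Formula

/-- Free (formal) variables of a formula. -/
def freeVars : Formula → Finset ℕ
  | prop _ => ∅
  | nprop _ => ∅
  | var x => {x}
  | or a b => a.freeVars ∪ b.freeVars
  | and a b => a.freeVars ∪ b.freeVars
  | dia a => a.freeVars
  | box a => a.freeVars
  | mu x a => a.freeVars.erase x
  | nu x a => a.freeVars.erase x

/-- A formula is closed if every formal variable is bound. -/
def Closed (φ : Formula) : Prop := φ.freeVars = ∅

/-- Substitution `φ[ψ/x]` (of a closed formula `ψ`, so capture is no issue). -/
def subst : Formula → ℕ → Formula → Formula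
  | prop p, _, _ => prop p
  | nprop p, _, _ => nprop p
  | var y, x, ψ => if y = x then ψ else var y
  | or a b, x, ψ => or (a.subst x ψ) (b.subst x ψ)
  | and a b, x, ψ => and (a.subst x ψ) (b.subst x ψ)
  | dia a, x, ψ => dia (a.subst x ψ)
  | box a, x, ψ => box (a.subst x ψ)
  | mu y a, x, ψ => if y = x then mu y a else mu y (a.subst x ψ)
  | nu y a, x, ψ => if y = x then nu y a else nu y (a.subst x ψ)

/-- The unfolding `φ[μx.φ]` of `μx.φ`. -/
def unfoldMu (x : ℕ) (φ : Formula) : Formula := φ.subst x (mu x φ)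

/-- The unfolding `φ[νx.φ]` of `νx.φ`. -/
def unfoldNu (x : ℕ) (φ : Formula) : Formula := φ.subst x (nu x φ)

/-- `η x. φ` where `η = ν` if `isNu` and `η = μ` otherwise. -/
def eta (isNu : Bool) (x : ℕ) (φ : Formula) : Formula := if isNu then nu x φ else mu x φ

/-- The unfolding `φ[ηx.φ]` of `ηx.φ`. -/
def unfoldEta (isNu : Bool) (x : ℕ) (φ : Formula) : Formula :=
  if isNu then unfoldNu x φ else unfoldMu x φ

/-- The negation (dual) of a formula. -/
def neg : Formula → Formula
  | prop p => nprop p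
  | nprop p => prop p
  | var x => var x
  | or a b => and a.neg b.neg
  | and a b => or a.neg b.neg
  | dia a => box a.neg
  | box a => dia a.neg
  | mu x a => nu x a.neg
  | nu x a => mu x a.neg

end Formula

/-! ## Kripke semantics -/

/-- A Kripke model (transition system with a valuation). -/
structure Kripke (W : Type) where
  rel : W → W → Prop
  val : ℕ → W → Prop

/-- Semantics of a formula in a Kripke model, under an assignment `env` of state
sets to the formal variables; `μ` and `ν` are interpreted as the least and
greatest fixpoints (given here by their Knaster–Tarski descriptions). -/
def sem {W : Type} (M : Kripke W) : Formula → (ℕ → Set W) → Set W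
  | .prop p, _ => {w | M.val p w}
  | .nprop p, _ => {w | ¬ M.val p w}
  | .var x, env => env x
  | .or a b, env => sem M a env ∪ sem M b env
  | .and a b, env => sem M a env ∩ sem M b env
  | .dia a, env => {w | ∃ v, M.rel w v ∧ v ∈ sem M a env}
  | .box a, env => {w | ∀ v, M.rel w v → v ∈ sem M a env}
  | .mu x a, env => ⋂₀ {S : Set W | sem M a (Function.update env x S) ⊆ S}
  | .nu x a, env => ⋃₀ {S : Set W | S ⊆ sem M a (Function.update env x S)}

/-- A sequent: a finite set of formulas (intended: closed formulas),
read disjunctively. -/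
abbrev Sequent := Finset Formula

/-- All formulas of the sequent are closed. -/
def ClosedSeq (Γ : Sequent) : Prop := ∀ φ ∈ Γ, φ.Closed

/-- A sequent is valid if its disjunction holds at every state of every Kripke model. -/
def ValidSeq (Γ : Sequent) : Prop :=
  ∀ (W : Type) (M : Kripke W) (env : ℕ → Set W) (w : W), ∃ φ ∈ Γ, w ∈ sem M φ env

/-! ## Closure, subsumption, adisjunctivity -/

/-- The trace step relation `φ ⤳ ψ`. -/
inductive TStep : Formula → Formula → Prop
  | orL (a b : Formula) : TStep (.or a b) a
  | orR (a b : Formula) : TStep (.or a b) b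
  | andL (a b : Formula) : TStep (.and a b) a
  | andR (a b : Formula) : TStep (.and a b) b
  | dia (a : Formula) : TStep (.dia a) a
  | box (a : Formula) : TStep (.box a) a
  | mu (x : ℕ) (a : Formula) : TStep (.mu x a) (Formula.unfoldMu x a)
  | nu (x : ℕ) (a : Formula) : TStep (.nu x a) (Formula.unfoldNu x a)

/-- The closure of a sequent: least superset closed under `⤳`. -/
def Clos (Γ : Sequent) : Set Formula :=
  {ψ | ∃ φ ∈ Γ, Relation.ReflTransGen TStep φ ψ}

/-- The subsumption order on formal variables (relative to an ambient sequent):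
`x ≤ y` iff `x = y` or `x` occurs free in the (ηy.ψ)-formula binding `y`. -/
def VarLe (Γ : Sequent) (x y : ℕ) : Prop :=
  x = y ∨ ∃ (b : Bool) (φ : Formula),
    Formula.eta b y φ ∈ Clos Γ ∧ x ∈ (Formula.eta b y φ).freeVars

/-- Adisjunctivity of a sequent. -/
def Adisjunctive (Γ : Sequent) : Prop :=
  ∀ (x : ℕ) (φ : Formula), Formula.nu x φ ∈ Clos Γ →
    ∀ ψ₀ ψ₁ : Formula, Formula.or ψ₀ ψ₁ ∈ Clos {Formula.nu x φ} →
      Formula.nu x φ ∉ Clos {ψ₀} ∨ Formula.nu x φ ∉ Clos {ψ₁}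

/-! ## The proof system NW -/

/-- An instance of an NW rule (recording context and principal formula). -/
inductive NWRule : Type
  | ax (p : ℕ)
  | orR (Γ : Sequent) (φ ψ : Formula)
  | andR (Γ : Sequent) (φ ψ : Formula)
  | weak (Γ : Sequent) (φ : Formula)
  | boxR (Γ : Sequent) (φ : Formula)
  | unfold (Γ : Sequent) (isNu : Bool) (x : ℕ) (φ : Formula)

namespace NWRule

/-- Conclusion of a rule instance. -/
def concl : NWRule → Sequent
  | .ax p => {.prop p, .nprop p}
  | .orR Γ φ ψ => insert (.or φ ψ) Γ
  | .andR Γ φ ψ => insert (.and φ ψ) Γ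
  | .weak Γ φ => insert φ Γ
  | .boxR Γ φ => insert (.box φ) (Γ.image Formula.dia)
  | .unfold Γ b x φ => insert (Formula.eta b x φ) Γ

/-- Premises of a rule instance. -/
def prems : NWRule → List Sequent
  | .ax _ => []
  | .orR Γ φ ψ => [insert φ (insert ψ Γ)]
  | .andR Γ φ ψ => [insert φ Γ, insert ψ Γ]
  | .weak Γ _ => [Γ]
  | .boxR Γ φ => [insert φ Γ]
  | .unfold Γ b x φ => [insert (Formula.unfoldEta b x φ) Γ]

/-- The descendant relation of a rule instance: `descends r i a b` holds if the
formula `b` in the `i`-th premise is a descendant of the formula `a` in the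
conclusion. -/
def descends : NWRule → ℕ → Formula → Formula → Prop
  | .ax _, _, _, _ => False
  | .orR Γ φ ψ, _, a, b => (a = .or φ ψ ∧ (b = φ ∨ b = ψ)) ∨ (a ∈ Γ ∧ b = a)
  | .andR Γ φ ψ, i, a, b => (a = .and φ ψ ∧ b = (if i = 0 then φ else ψ)) ∨ (a ∈ Γ ∧ b = a)
  | .weak Γ _, _, a, b => a ∈ Γ ∧ b = a
  | .boxR Γ φ, _, a, b => (a = .box φ ∧ b = φ) ∨ (∃ c ∈ Γ, a = .dia c ∧ b = c)
  | .unfold Γ isNu x φ, _, a, b =>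
      (a = Formula.eta isNu x φ ∧ b = Formula.unfoldEta isNu x φ) ∨ (a ∈ Γ ∧ b = a)

end NWRule

/-- An NW derivation of `Δ`: a (possibly infinite) tree of nodes (addressed by
lists of child indices) respecting the NW rules, all of whose leaves are axioms
(the only rules without premises are axioms). -/
structure NWDeriv (Δ : Sequent) where
  tree : Set (List ℕ)
  root_mem : [] ∈ tree
  prefix_closed : ∀ u n, u ++ [n] ∈ tree → u ∈ tree
  rule : List ℕ → NWRule
  label : List ℕ → Sequent
  label_root : label [] = Δ
  label_concl : ∀ u ∈ tree, label u = (rule u).concl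
  child_iff : ∀ u ∈ tree, ∀ n : ℕ, (u ++ [n] ∈ tree ↔ n < (rule u).prems.length)
  label_child : ∀ u ∈ tree, ∀ n : ℕ, ∀ h : n < (rule u).prems.length,
      label (u ++ [n]) = (rule u).prems.get ⟨n, h⟩

/-- The node at depth `n` on the branch described by the sequence `f` of child
indices. -/
def branchNode (f : ℕ → ℕ) (n : ℕ) : List ℕ := (List.range n).map f

namespace NWDeriv

variable {Δ : Sequent}

/-- `f` describes an infinite branch of the derivation. -/
def IsBranch (π : NWDeriv Δ) (f : ℕ → ℕ) : Prop := ∀ n, branchNode f n ∈ π.tree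

/-- `g` is a trace on the branch `f` starting at depth `k`. -/
def IsTraceOn (π : NWDeriv Δ) (f : ℕ → ℕ) (k : ℕ) (g : ℕ → Formula) : Prop :=
  ∀ n, g n ∈ π.label (branchNode f (k + n)) ∧
    (π.rule (branchNode f (k + n))).descends (f (k + n)) (g n) (g (n + 1))

end NWDeriv

/-- The set of formulas occurring infinitely often in the sequence `g`. -/
def InfOcc (g : ℕ → Formula) : Set Formula := {φ | ∀ N, ∃ n ≥ N, g n = φ}

/-- `g` is a ν-trace: the subsumption-minimal fixpoint formula occurring
infinitely often on it (equivalently, the fixpoint formula occurring infinitely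
often whose closure contains every formula occurring infinitely often) is a
ν-formula. -/
def IsNuTraceSeq (g : ℕ → Formula) : Prop :=
  ∃ (x : ℕ) (φ : Formula), Formula.nu x φ ∈ InfOcc g ∧
    ∀ ψ ∈ InfOcc g, ψ ∈ Clos {Formula.nu x φ}

/-- An NW derivation is a proof if every infinite branch carries a ν-trace. -/
def NWDeriv.IsProof {Δ : Sequent} (π : NWDeriv Δ) : Prop :=
  ∀ f : ℕ → ℕ, π.IsBranch f → ∃ k g, π.IsTraceOn f k g ∧ IsNuTraceSeq g

/-- Finite traces inside a derivation: `TraceRT π u φ v ψ` says there is a trace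
from the formula `φ` at node `u` to the formula `ψ` at node `v`. -/
inductive NWDeriv.TraceRT {Δ : Sequent} (π : NWDeriv Δ) :
    List ℕ → Formula → List ℕ → Formula → Prop
  | refl (u : List ℕ) (φ : Formula) : NWDeriv.TraceRT π u φ u φ
  | step {u : List ℕ} {φ : Formula} {v : List ℕ} {ψ : Formula} {n : ℕ} {χ : Formula} :
      NWDeriv.TraceRT π u φ v ψ → v ++ [n] ∈ π.tree →
      (π.rule v).descends n ψ χ → NWDeriv.TraceRT π u φ (v ++ [n]) χ

/-! ## The concrete sequent Φ -/

/-- The propositional letter `p`. -/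
def pP : Formula := .prop 0
/-- The negated letter `p̄`. -/
def pN : Formula := .nprop 0
/-- `νy.□(p ∧ (□x ∨ ◇y))`, with `x` (variable 0) free. -/
def psiIn : Formula := .nu 1 (.box (.and pP (.or (.box (.var 0)) (.dia (.var 1)))))
/-- `◇(p̄ ∧ (□x ∨ ◇νy.□(p ∧ (□x ∨ ◇y))))`, the body of `νx.φ`. -/
def phiBody : Formula := .dia (.and pN (.or (.box (.var 0)) (.dia psiIn)))
/-- `νx.φ = νx.◇(p̄ ∧ (□x ∨ ◇νy.□(p ∧ (□x ∨ ◇y))))`. -/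
def nuX : Formula := .nu 0 phiBody
/-- `νy.ψ = νy.□(p ∧ (□νx.φ ∨ ◇y))`. -/
def nuY : Formula := psiIn.subst 0 nuX
/-- `□(p ∧ (□νx.φ ∨ ◇y))`, the body of `νy.ψ`. -/
def psiBody : Formula := .box (.and pP (.or (.box nuX) (.dia (.var 1))))
/-- The sequent `Φ = {νx.φ, νy.ψ}`. -/
def PhiSeq : Sequent := {nuX, nuY}
/-- `χ = □νx.φ ∨ ◇νy.ψ`. -/
def chi : Formula := .or (.box nuX) (.dia nuY)
/-- The unfolding `φ[νx.φ]`. -/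
def unfX : Formula := Formula.unfoldNu 0 phiBody
/-- The unfolding `ψ[νy.ψ]`. -/
def unfY : Formula := Formula.unfoldNu 1 psiBody

/-! ## Unfolding trees for NW proofs of Φ -/

namespace NWDeriv

/-- An unfolding node: a node labelled by the sequent Φ. -/
def UnfNode (π : NWDeriv PhiSeq) (u : List ℕ) : Prop := u ∈ π.tree ∧ π.label u = PhiSeq

/-- `v` is a child of `u` in the unfolding tree `T_π`. -/
def TChild (π : NWDeriv PhiSeq) (u v : List ℕ) : Prop :=
  π.UnfNode u ∧ π.UnfNode v ∧ u <+: v ∧ u ≠ v ∧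
    ∀ w, u <+: w → w <+: v → w ≠ u → w ≠ v → ¬ π.UnfNode w

/-- `v` is an x-node (child of `u` in `T_π`): no trace from `νy.ψ` at `u` to
`νx.φ` or `νy.ψ` at `v`. -/
def IsXNode (π : NWDeriv PhiSeq) (u v : List ℕ) : Prop :=
  π.TChild u v ∧ ¬ (π.TraceRT u nuY v nuX ∨ π.TraceRT u nuY v nuY)

/-- `v` is a y-node (child of `u` in `T_π`): no trace from `νx.φ` at `u` to
`νx.φ` or `νy.ψ` at `v`. -/
def IsYNode (π : NWDeriv PhiSeq) (u v : List ℕ) : Prop :=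
  π.TChild u v ∧ ¬ (π.TraceRT u nuX v nuX ∨ π.TraceRT u nuX v nuY)

end NWDeriv

/-! ## The annotated proof system Clo (optionally with cut) -/

/-- Names: `(x, i)` is the `i`-th name for the formal variable `x`. -/
abbrev Name := ℕ × ℕ
/-- Annotations: finite words of names. -/
abbrev Ann := List Name
/-- Annotated formulas `φ^a`. -/
abbrev AFormula := Formula × Ann
/-- Annotated sequents. -/
abbrev ASequent := Finset AFormula

/-- Erase the annotations of an annotated sequent. -/
def stripSeq (Δ : ASequent) : Sequent := Δ.image Prod.fst

/-- Equip each formula of a plain sequent with the empty annotation. -/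
def annSeq (Γ : Sequent) : ASequent := Γ.image (fun φ => (φ, ([] : Ann)))

/-- `a ≤ x`: every name in the annotation `a` is a name of a variable `≤ x`
in the subsumption order (relative to the ambient sequent `Γ₀`). -/
def AnnLe (Γ₀ : Sequent) (a : Ann) (x : ℕ) : Prop := ∀ m ∈ a, VarLe Γ₀ m.1 x

/-- The name `x'` does not appear in the annotated sequent `Δ`. -/
def NameFresh (x' : Name) (Δ : ASequent) : Prop := ∀ φa ∈ Δ, x' ∉ φa.2

/-- An instance of a rule of Clo (with cut), including the bookkeeping
constructor `asm` for discharged assumptions. -/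
inductive CloRule : Type
  | ax (p : ℕ)
  | orR (Γ : ASequent) (φ ψ : Formula) (a : Ann)
  | andR (Γ : ASequent) (φ ψ : Formula) (a : Ann)
  | weak (Γ : ASequent) (φ : Formula) (a : Ann)
  | boxR (Γ : ASequent) (φ : Formula) (a : Ann)
  | unfold (Γ : ASequent) (isNu : Bool) (x : ℕ) (φ : Formula) (a : Ann)
  | exp (l : List (Formula × Ann × Ann))
  | clo (Γ : ASequent) (x : ℕ) (φ : Formula) (a : Ann) (x' : Name)
  | asm (Γ : ASequent) (x : ℕ) (φ : Formula) (a : Ann) (x' : Name)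
  | cut (Γ : ASequent) (A : Formula)

namespace CloRule

/-- Conclusion of a rule instance. -/
def concl : CloRule → ASequent
  | .ax p => {(.prop p, []), (.nprop p, [])}
  | .orR Γ φ ψ a => insert (.or φ ψ, a) Γ
  | .andR Γ φ ψ a => insert (.and φ ψ, a) Γ
  | .weak Γ φ a => insert (φ, a) Γ
  | .boxR Γ φ a => insert (.box φ, a) (Γ.image (fun q => (Formula.dia q.1, q.2)))
  | .unfold Γ b x φ a => insert (Formula.eta b x φ, a) Γ
  | .exp l => (l.map (fun t => (t.1, t.2.2))).toFinset
  | .clo Γ x φ a _ => insert (.nu x φ, a) Γ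
  | .asm Γ x φ a x' => insert (.nu x φ, a ++ [x']) Γ
  | .cut Γ _ => Γ

/-- Premises of a rule instance (a discharged assumption is a leaf). -/
def prems : CloRule → List ASequent
  | .ax _ => []
  | .orR Γ φ ψ a => [insert (φ, a) (insert (ψ, a) Γ)]
  | .andR Γ φ ψ a => [insert (φ, a) Γ, insert (ψ, a) Γ]
  | .weak Γ _ _ => [Γ]
  | .boxR Γ φ a => [insert (φ, a) Γ]
  | .unfold Γ b x φ a => [insert (Formula.unfoldEta b x φ, a) Γ]
  | .exp l => [(l.map (fun t => (t.1, t.2.1))).toFinset]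
  | .clo Γ x φ a x' => [insert (Formula.unfoldNu x φ, a ++ [x']) Γ]
  | .asm _ _ _ _ _ => []
  | .cut Γ A => [insert (A, []) Γ, insert (A.neg, []) Γ]

/-- Side conditions of the rules, relative to the ambient plain sequent `Γ₀`
(used for the subsumption order). -/
def Ok (Γ₀ : Sequent) : CloRule → Prop
  | .unfold _ _ x _ a => AnnLe Γ₀ a x
  | .exp l => ∀ t ∈ l, List.Sublist t.2.1 t.2.2
  | .clo Γ x _ a x' => x'.1 = x ∧ AnnLe Γ₀ a x ∧ NameFresh x' Γ
  | .asm _ x _ _ x' => x'.1 = x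
  | .cut _ A => A.Closed
  | _ => True

/-- Is this rule an instance of exp? -/
def IsExp : CloRule → Prop
  | .exp _ => True
  | _ => False

/-- Is this rule a discharged assumption? -/
def IsAsm : CloRule → Prop
  | .asm _ _ _ _ _ => True
  | _ => False

/-- Is this rule a cut? -/
def IsCut : CloRule → Prop
  | .cut _ _ => True
  | _ => False

/-- The discharge token of a clo rule. -/
def cloToken : CloRule → Option Name
  | .clo _ _ _ _ x' => some x'
  | _ => none

/-- The descendant relation of a rule instance, on plain formulas. -/
def descends : CloRule → ℕ → Formula → Formula → Prop
  | .ax _, _, _, _ => False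
  | .orR Γ φ ψ _, _, c, d => (c = .or φ ψ ∧ (d = φ ∨ d = ψ)) ∨ ((∃ e ∈ Γ, c = e.1) ∧ d = c)
  | .andR Γ φ ψ _, i, c, d =>
      (c = .and φ ψ ∧ d = (if i = 0 then φ else ψ)) ∨ ((∃ e ∈ Γ, c = e.1) ∧ d = c)
  | .weak Γ _ _, _, c, d => (∃ e ∈ Γ, c = e.1) ∧ d = c
  | .boxR Γ φ _, _, c, d => (c = .box φ ∧ d = φ) ∨ (∃ e ∈ Γ, c = .dia e.1 ∧ d = e.1)
  | .unfold Γ b x φ _, _, c, d =>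
      (c = Formula.eta b x φ ∧ d = Formula.unfoldEta b x φ) ∨ ((∃ e ∈ Γ, c = e.1) ∧ d = c)
  | .exp l, _, c, d => (∃ t ∈ l, c = t.1) ∧ d = c
  | .clo Γ x φ _ _, _, c, d =>
      (c = .nu x φ ∧ d = Formula.unfoldNu x φ) ∨ ((∃ e ∈ Γ, c = e.1) ∧ d = c)
  | .asm _ _ _ _ _, _, _, _ => False
  | .cut Γ _, _, c, d => (∃ e ∈ Γ, c = e.1) ∧ d = c

end CloRule

/-- A Clo derivation of the annotated sequent `Δ₀` (a possibly infinite tree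
respecting the rules of Clo, whose leaves are axioms or discharged
assumptions).  If `cut = false` the cut rule is not allowed. -/
structure CloDeriv (cut : Bool) (Δ₀ : ASequent) where
  tree : Set (List ℕ)
  root_mem : [] ∈ tree
  prefix_closed : ∀ u n, u ++ [n] ∈ tree → u ∈ tree
  rule : List ℕ → CloRule
  label : List ℕ → ASequent
  label_root : label [] = Δ₀
  label_concl : ∀ u ∈ tree, label u = (rule u).concl
  child_iff : ∀ u ∈ tree, ∀ n : ℕ, (u ++ [n] ∈ tree ↔ n < (rule u).prems.length)
  label_child : ∀ u ∈ tree, ∀ n : ℕ, ∀ h : n < (rule u).prems.length,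
      label (u ++ [n]) = (rule u).prems.get ⟨n, h⟩
  ok : ∀ u ∈ tree, (rule u).Ok (stripSeq Δ₀)
  cut_ok : ∀ u ∈ tree, (rule u).IsCut → cut = true
  token_unique : ∀ u ∈ tree, ∀ v ∈ tree, ∀ x' : Name,
      (rule u).cloToken = some x' → (rule v).cloToken = some x' → u = v
  discharged : ∀ u ∈ tree, ∀ (Γ : ASequent) (x : ℕ) (φ : Formula) (a : Ann) (x' : Name),
      rule u = .asm Γ x φ a x' →
      ∃ v, v <+: u ∧ v ≠ u ∧ v ∈ tree ∧ rule v = .clo Γ x φ a x'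

namespace CloDeriv

variable {c : Bool} {Δ₀ : ASequent}

/-- Finite traces (of plain formulas) inside a Clo derivation. -/
inductive TraceRT (ρ : CloDeriv c Δ₀) : List ℕ → Formula → List ℕ → Formula → Prop
  | refl (u : List ℕ) (φ : Formula) : TraceRT ρ u φ u φ
  | step {u : List ℕ} {φ : Formula} {v : List ℕ} {ψ : Formula} {n : ℕ} {χ : Formula} :
      TraceRT ρ u φ v ψ → v ++ [n] ∈ ρ.tree →
      (ρ.rule v).descends n ψ χ → TraceRT ρ u φ (v ++ [n]) χ

end CloDeriv

/-- A Clo derivation of the plain sequent `Φ` (all annotations at the root empty). -/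
abbrev CloDerivPhi := CloDeriv false (annSeq PhiSeq)

namespace CloDeriv

/-- Unfolding node of a Clo derivation of Φ: labelled by (an annotated version
of) the sequent Φ and not by the rule exp. -/
def UnfNode (ρ : CloDerivPhi) (u : List ℕ) : Prop :=
  u ∈ ρ.tree ∧ stripSeq (ρ.label u) = PhiSeq ∧ ¬ (ρ.rule u).IsExp

/-- `v` is a child of `u` in the unfolding tree `T_ρ`. -/
def TChild (ρ : CloDerivPhi) (u v : List ℕ) : Prop :=
  ρ.UnfNode u ∧ ρ.UnfNode v ∧ u <+: v ∧ u ≠ v ∧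
    ∀ w, u <+: w → w <+: v → w ≠ u → w ≠ v → ¬ ρ.UnfNode w

/-- `v` is an x-node (child of `u` in `T_ρ`). -/
def IsXNode (ρ : CloDerivPhi) (u v : List ℕ) : Prop :=
  ρ.TChild u v ∧ ¬ (ρ.TraceRT u nuY v nuX ∨ ρ.TraceRT u nuY v nuY)

/-- `v` is a y-node (child of `u` in `T_ρ`). -/
def IsYNode (ρ : CloDerivPhi) (u v : List ℕ) : Prop :=
  ρ.TChild u v ∧ ¬ (ρ.TraceRT u nuX v nuX ∨ ρ.TraceRT u nuX v nuY)

/-- A root-like unfolding node: no node in the subtree rooted at `u` is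
discharged by a clo rule applied at a proper ancestor of `u`. -/
def RootLike (ρ : CloDerivPhi) (u : List ℕ) : Prop :=
  ρ.UnfNode u ∧ ∀ w ∈ ρ.tree, u <+: w →
    ∀ (Γ : ASequent) (x : ℕ) (φ : Formula) (a : Ann) (x' : Name),
      ρ.rule w = .asm Γ x φ a x' →
      ∀ v ∈ ρ.tree, (ρ.rule v).cloToken = some x' → ¬ (v <+: u ∧ v ≠ u)

end CloDeriv

/-! ## Obtaining Clo derivations from NW proofs -/

/-- Erasing annotations from a Clo rule instance gives an NW rule instance
(clo becomes a ν-unfolding); exp and discharged assumptions are erased. -/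
def CloRule.strip : CloRule → Option NWRule
  | .ax p => some (.ax p)
  | .orR Γ φ ψ _ => some (.orR (stripSeq Γ) φ ψ)
  | .andR Γ φ ψ _ => some (.andR (stripSeq Γ) φ ψ)
  | .weak Γ φ _ => some (.weak (stripSeq Γ) φ)
  | .boxR Γ φ _ => some (.boxR (stripSeq Γ) φ)
  | .unfold Γ b x φ _ => some (.unfold (stripSeq Γ) b x φ)
  | .exp _ => none
  | .clo Γ x φ _ _ => some (.unfold (stripSeq Γ) true x φ)
  | .asm _ _ _ _ _ => none
  | .cut _ _ => none

/-- `ρ` is obtained from the NW proof `π` by changing some ν-unfoldings into clo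
rules with discharged assumptions (pruning the tree there) and adding
annotations and exp rules: witnessed by a structure-preserving map `e` from the
nodes of `ρ` to the nodes of `π` that collapses the inserted exp nodes, matches
the labels up to annotations, and matches the rules up to annotations (with clo
read as ν-unfolding). -/
def Obtains {Γ : Sequent} (π : NWDeriv Γ) (ρ : CloDeriv false (annSeq Γ)) : Prop :=
  ∃ e : List ℕ → List ℕ,
    e [] = [] ∧
    (∀ u ∈ ρ.tree, e u ∈ π.tree) ∧
    (∀ u ∈ ρ.tree, stripSeq (ρ.label u) = π.label (e u)) ∧
    (∀ u ∈ ρ.tree, (ρ.rule u).IsExp → e (u ++ [0]) = e u) ∧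
    (∀ u ∈ ρ.tree, ¬ (ρ.rule u).IsExp → ∀ n : ℕ, u ++ [n] ∈ ρ.tree →
        e (u ++ [n]) = e u ++ [n]) ∧
    (∀ u ∈ ρ.tree, ∀ r : NWRule, (ρ.rule u).strip = some r → π.rule (e u) = r)

/-! ## The infinite unfolding of a Clo proof -/

/-- `Resolves u w`: in the infinite unfolding with exp nodes removed, the node
`u` of the original Clo derivation is represented by the node `w`, obtained by
skipping exp rules and replacing discharged assumptions by their companions. -/
inductive CloDeriv.Resolves {c : Bool} {Δ₀ : ASequent} (ρ : CloDeriv c Δ₀) :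
    List ℕ → List ℕ → Prop
  | base {u : List ℕ} : u ∈ ρ.tree → ¬ (ρ.rule u).IsExp → ¬ (ρ.rule u).IsAsm →
      CloDeriv.Resolves ρ u u
  | exp {u w : List ℕ} : u ∈ ρ.tree → (ρ.rule u).IsExp →
      CloDeriv.Resolves ρ (u ++ [0]) w → CloDeriv.Resolves ρ u w
  | asm {u v w : List ℕ} {Γ : ASequent} {x : ℕ} {φ : Formula} {a : Ann} {x' : Name} :
      u ∈ ρ.tree → ρ.rule u = .asm Γ x φ a x' →
      v ∈ ρ.tree → (ρ.rule v).cloToken = some x' →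
      CloDeriv.Resolves ρ v w → CloDeriv.Resolves ρ u w

/-- `π` is the NW derivation obtained from the infinite unfolding of the Clo
derivation `ρ` by replacing clo rules by ν-unfoldings, removing exp nodes and
erasing all annotations: witnessed by a map `f` sending each node of `π` to the
node of `ρ` it comes from, commuting with the resolution of exp nodes and of
discharged assumptions by their companions. -/
def IsUnfoldedStrip {Γ : Sequent} (ρ : CloDeriv false (annSeq Γ)) (π : NWDeriv Γ) : Prop :=
  ∃ f : List ℕ → List ℕ,
    ρ.Resolves [] (f []) ∧
    (∀ u ∈ π.tree, f u ∈ ρ.tree) ∧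
    (∀ u ∈ π.tree, stripSeq (ρ.label (f u)) = π.label u) ∧
    (∀ u ∈ π.tree, (ρ.rule (f u)).strip = some (π.rule u)) ∧
    (∀ u ∈ π.tree, ∀ n : ℕ, u ++ [n] ∈ π.tree → ρ.Resolves (f u ++ [n]) (f (u ++ [n])))

/-!
Split on whether the state satisfies `◇¬p`. The set `◇¬p` is a post-fixpoint of the body of
`νx.φ`, and its complement `□p` one of the body of `νy.ψ`. Both rest on one observation: for any
`X ⊇ ◇¬p`, `□p` is a post-fixpoint of `Y ↦ □(p ∧ (□X ∨ ◇Y))`, because every successor of a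
`□p`-state satisfies `p` and either has a successor in `□p` or has all its successors in `◇¬p`.
-/

theorem subset_sem_nu {W : Type} {M : Kripke W} {env : ℕ → Set W} {x : ℕ} {a : Formula}
    {S : Set W} (hS : S ⊆ sem M a (Function.update env x S)) : S ⊆ sem M (.nu x a) env :=
  fun _ hw => Set.mem_sUnion.mpr ⟨S, hS, hw⟩

/-- The states satisfying `◇¬p`. -/
def Kripke.diaNeg {W : Type} (M : Kripke W) (p : ℕ) : Set W :=
  {w | ∃ v, M.rel w v ∧ ¬ M.val p v}

section Phi

variable {W : Type} {M : Kripke W}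

theorem Kripke.val_and_box_or_dia_of_not_mem_diaNeg {p : ℕ} {X : Set W}
    (hX : M.diaNeg p ⊆ X) {w z : W} (hw : w ∉ M.diaNeg p) (hz : M.rel w z) :
    M.val p z ∧ ((∀ y, M.rel z y → y ∈ X) ∨ ∃ y, M.rel z y ∧ y ∉ M.diaNeg p) := by
  refine ⟨not_not.mp fun hpz => hw ⟨z, hz, hpz⟩, ?_⟩
  by_cases h : ∃ y, M.rel z y ∧ y ∉ M.diaNeg p
  · exact Or.inr h
  · push Not at h
    exact Or.inl fun y hy => hX (h y hy)

theorem diaNeg_compl_subset_sem_psiIn (env : ℕ → Set W) (hX : M.diaNeg 0 ⊆ env 0) :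
    (M.diaNeg 0)ᶜ ⊆ sem M psiIn env := by
  refine subset_sem_nu fun w hw z hz => ?_
  simpa [sem, pP, Function.update] using M.val_and_box_or_dia_of_not_mem_diaNeg hX hw hz

theorem diaNeg_subset_sem_nuX (env : ℕ → Set W) : M.diaNeg 0 ⊆ sem M nuX env := by
  refine subset_sem_nu ?_
  rintro w ⟨v, hv, hpv⟩
  refine ⟨v, hv, hpv, ?_⟩
  by_cases h : ∀ u, M.rel v u → u ∈ M.diaNeg 0
  · left
    simpa [sem, Function.update] using h
  · right
    push Not at h
    obtain ⟨u, hu, hu_not⟩ := h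
    exact ⟨u, hu, diaNeg_compl_subset_sem_psiIn _ (by simp) hu_not⟩

theorem diaNeg_compl_subset_sem_nuY (env : ℕ → Set W) : (M.diaNeg 0)ᶜ ⊆ sem M nuY env := by
  refine subset_sem_nu (a := psiBody) fun w hw z hz => ?_
  have hX := diaNeg_subset_sem_nuX (M := M) (Function.update env 1 (M.diaNeg 0)ᶜ)
  simpa [sem, pP, Function.update] using M.val_and_box_or_dia_of_not_mem_diaNeg hX hw hz

end Phi

/-- The sequent Φ = {νx.φ, νy.ψ} is valid: νx.φ ∨ νy.ψ holds at
every state of every Kripke model. -/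
theorem Phi_valid : ValidSeq PhiSeq := by
  intro W M env w
  by_cases hw : w ∈ M.diaNeg 0
  · exact ⟨nuX, by simp [PhiSeq], diaNeg_subset_sem_nuX env hw⟩
  · exact ⟨nuY, by simp [PhiSeq], diaNeg_compl_subset_sem_nuY env hw⟩
end

section
/- There exists an NW proof of the sequent Φ = {νx.φ, νy.ψ}. -/
set_option linter.unusedVariables false

/-! ## Construction of an NW proof of Φ -/

namespace PhiProofConstr

/-- Abbreviations. -/
def aN : Formula := .and pN chi
def aP : Formula := .and pP chi

/-- The ten states of the cyclic proof. -/
inductive St : Type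
  | s0 | s1 | s2 | s3 | s4 | s5 | s6a | s6b | s7 | s8
  deriving DecidableEq

open St

def ruleOf : St → NWRule
  | s0 => .unfold {nuY} true 0 phiBody
  | s1 => .unfold {unfX} true 1 psiBody
  | s2 => .boxR {aN} aP
  | s3 => .andR {aN} pP chi
  | s4 => .andR {pP} pN chi
  | s5 => .ax 0
  | s6a => .weak {chi} pP
  | s6b => .weak {chi} aN
  | s7 => .orR ∅ (.box nuX) (.dia nuY)
  | s8 => .boxR {nuY} nuX

def kids : St → List St
  | s0 => [s1] | s1 => [s2] | s2 => [s3] | s3 => [s4, s6b]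
  | s4 => [s5, s6a] | s5 => [] | s6a => [s7] | s6b => [s7]
  | s7 => [s8] | s8 => [s0]

lemma kids_concl (s : St) : (kids s).map (fun c => (ruleOf c).concl) = (ruleOf s).prems := by
  cases s <;> decide

lemma kids_len (s : St) : (kids s).length = (ruleOf s).prems.length := by
  rw [← kids_concl s, List.length_map]

lemma isSome_getElem? {α : Type _} (l : List α) (n : ℕ) :
    l[n]?.isSome ↔ n < l.length := by
  rw [Option.isSome_iff_exists]
  constructor
  · rintro ⟨a, h⟩; exact (List.getElem?_eq_some_iff.mp h).1
  · intro h; exact ⟨l[n], List.getElem?_eq_getElem h⟩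

lemma concl_getElem (s : St) (n : ℕ) (hn : n < (kids s).length)
    (hn' : n < (ruleOf s).prems.length) :
    (ruleOf (kids s)[n]).concl = (ruleOf s).prems[n] := by
  have h2 : ((kids s).map (fun c => (ruleOf c).concl))[n]? = (ruleOf s).prems[n]? := by
    rw [kids_concl s]
  rw [List.getElem?_map, List.getElem?_eq_getElem hn, List.getElem?_eq_getElem hn'] at h2
  simpa using h2

def stRev : List ℕ → Option St
  | [] => some s0
  | n :: r => (stRev r).bind fun s => (kids s)[n]?

def st (u : List ℕ) : Option St := stRev u.reverse

lemma st_append (u : List ℕ) (n : ℕ) :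
    st (u ++ [n]) = (st u).bind fun s => (kids s)[n]? := by
  simp only [st, List.reverse_append, List.reverse_singleton, List.singleton_append]
  rfl

def tr : Set (List ℕ) := {u | (st u).isSome}

def rl (u : List ℕ) : NWRule :=
  match st u with
  | some s => ruleOf s
  | none => .ax 0

lemma rl_of_st {u : List ℕ} {s : St} (h : st u = some s) : rl u = ruleOf s := by
  simp [rl, h]

/-- The NW derivation. -/
def deriv : NWDeriv PhiSeq where
  tree := tr
  root_mem := rfl
  prefix_closed := by
    intro u n h
    have h' : (st (u ++ [n])).isSome := h
    rw [st_append] at h'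
    cases hs : st u with
    | none => rw [hs] at h'; simp at h'
    | some s => exact (by simp [tr, hs] : u ∈ tr)
  rule := rl
  label := fun u => (rl u).concl
  label_root := by decide
  label_concl := fun _ _ => rfl
  child_iff := by
    intro u hu n
    obtain ⟨s, hs⟩ := Option.isSome_iff_exists.mp hu
    have hmem : (u ++ [n] ∈ tr) ↔ ((kids s)[n]?).isSome := by
      constructor
      · intro h; have h' : (st (u ++ [n])).isSome := h
        rwa [st_append, hs, Option.bind_some] at h'
      · intro h; show (st (u ++ [n])).isSome
        rwa [st_append, hs, Option.bind_some]
    rw [hmem, rl_of_st hs, ← kids_len s]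
    exact isSome_getElem? (kids s) n
  label_child := by
    intro u hu n
    obtain ⟨s, hs⟩ := Option.isSome_iff_exists.mp hu
    rw [rl_of_st hs]
    intro h
    have hn : n < (kids s).length := by rw [kids_len s]; exact h
    have hst : st (u ++ [n]) = some ((kids s)[n]) := by
      rw [st_append, hs, Option.bind_some, List.getElem?_eq_getElem hn]
    show (rl (u ++ [n])).concl = _
    rw [rl_of_st hst]
    exact concl_getElem s n hn h

/-! ### Branches -/

section Branch

variable (f : ℕ → ℕ)

/-- The state at depth `n` on the branch `f`. -/
def sAt (n : ℕ) : St := (st (branchNode f n)).getD s5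

variable (hf : ∀ n, (st (branchNode f n)).isSome)

include hf in
lemma st_branch (n : ℕ) : st (branchNode f n) = some (sAt f n) := by
  have h0 := hf n
  cases h : st (branchNode f n) with
  | none => rw [h] at h0; simp at h0
  | some s => simp [sAt, h]

lemma branch_succ (n : ℕ) : branchNode f (n + 1) = branchNode f n ++ [f n] := by
  simp [branchNode, List.range_succ]

include hf in
lemma step (n : ℕ) : (kids (sAt f n))[f n]? = some (sAt f (n + 1)) := by
  have h2 := st_branch f hf (n + 1)
  rw [branch_succ, st_append, st_branch f hf n, Option.bind_some] at h2
  exact h2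

include hf in
lemma rl_branch (n : ℕ) : rl (branchNode f n) = ruleOf (sAt f n) :=
  rl_of_st (st_branch f hf n)

include hf in
lemma not_s5 (n : ℕ) : sAt f n ≠ s5 := by
  intro h
  have h1 := step f hf n
  rw [h] at h1
  simp [kids] at h1

include hf in
lemma step_single {n : ℕ} {c : St} (h : kids (sAt f n) = [c]) :
    sAt f (n + 1) = c ∧ f n = 0 := by
  have hs := step f hf n
  rw [h] at hs
  rcases hq : f n with _ | k <;> rw [hq] at hs
  · simp at hs; exact ⟨hs.symm, rfl⟩
  · simp at hs

include hf in
lemma step_pair {n : ℕ} {c d : St} (h : kids (sAt f n) = [c, d]) :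
    (sAt f (n + 1) = c ∧ f n = 0) ∨ (sAt f (n + 1) = d ∧ f n = 1) := by
  have hs := step f hf n
  rw [h] at hs
  rcases hq : f n with _ | _ | k <;> rw [hq] at hs
  · simp at hs; exact Or.inl ⟨hs.symm, rfl⟩
  · simp at hs; exact Or.inr ⟨hs.symm, rfl⟩
  · simp at hs

/-! ### The trace -/

/-- The trace along the branch `f`. -/
def g (n : ℕ) : Formula :=
  match sAt f n with
  | s0 => if sAt f (n + 4) = s4 then nuX else nuY
  | s1 => if sAt f (n + 3) = s4 then unfX else nuY
  | s2 => if sAt f (n + 2) = s4 then unfX else unfY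
  | s3 => if sAt f (n + 1) = s4 then aN else aP
  | s4 => aN
  | s5 => pP
  | s6a => chi
  | s6b => chi
  | s7 => chi
  | s8 => if sAt f (n + 5) = s4 then .box nuX else .dia nuY

include hf in
lemma trace_main (n : ℕ) :
    g f n ∈ (ruleOf (sAt f n)).concl ∧
      (ruleOf (sAt f n)).descends (f n) (g f n) (g f (n + 1)) := by
  cases h : sAt f n with
  | s0 =>
    obtain ⟨h1, hq⟩ := step_single f hf (by rw [h]; rfl)
    have e : n + 1 + 3 = n + 4 := by omega
    by_cases hc : sAt f (n + 4) = s4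
    · have e1 : g f n = nuX := by simp [g, h, hc]
      have e2 : g f (n + 1) = unfX := by simp [g, h1, e, hc]
      rw [e1, e2]
      exact ⟨by decide, Or.inl (by decide)⟩
    · have e1 : g f n = nuY := by simp [g, h, hc]
      have e2 : g f (n + 1) = nuY := by simp [g, h1, e, hc]
      rw [e1, e2]
      exact ⟨by decide, Or.inr (by decide)⟩
  | s1 =>
    obtain ⟨h1, hq⟩ := step_single f hf (by rw [h]; rfl)
    have e : n + 1 + 2 = n + 3 := by omega
    by_cases hc : sAt f (n + 3) = s4
    · have e1 : g f n = unfX := by simp [g, h, hc]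
      have e2 : g f (n + 1) = unfX := by simp [g, h1, e, hc]
      rw [e1, e2]
      exact ⟨by decide, Or.inr (by decide)⟩
    · have e1 : g f n = nuY := by simp [g, h, hc]
      have e2 : g f (n + 1) = unfY := by simp [g, h1, e, hc]
      rw [e1, e2]
      exact ⟨by decide, Or.inl (by decide)⟩
  | s2 =>
    obtain ⟨h1, hq⟩ := step_single f hf (by rw [h]; rfl)
    have e : n + 1 + 1 = n + 2 := by omega
    by_cases hc : sAt f (n + 2) = s4
    · have e1 : g f n = unfX := by simp [g, h, hc]
      have e2 : g f (n + 1) = aN := by simp [g, h1, e, hc]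
      rw [e1, e2]
      exact ⟨by decide, Or.inr (by decide)⟩
    · have e1 : g f n = unfY := by simp [g, h, hc]
      have e2 : g f (n + 1) = aP := by simp [g, h1, e, hc]
      rw [e1, e2]
      exact ⟨by decide, Or.inl (by decide)⟩
  | s3 =>
    rcases step_pair f hf (by rw [h]; rfl) with ⟨h1, hq⟩ | ⟨h1, hq⟩
    · have e1 : g f n = aN := by simp [g, h, h1]
      have e2 : g f (n + 1) = aN := by simp [g, h1]
      rw [e1, e2, hq]
      exact ⟨by decide, Or.inr (by decide)⟩
    · have e1 : g f n = aP := by simp [g, h, h1]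
      have e2 : g f (n + 1) = chi := by simp [g, h1]
      rw [e1, e2, hq]
      exact ⟨by decide, Or.inl (by decide)⟩
  | s4 =>
    rcases step_pair f hf (by rw [h]; rfl) with ⟨h1, hq⟩ | ⟨h1, hq⟩
    · exact absurd h1 (not_s5 f hf (n + 1))
    · have e1 : g f n = aN := by simp [g, h]
      have e2 : g f (n + 1) = chi := by simp [g, h1]
      rw [e1, e2, hq]
      exact ⟨by decide, Or.inl (by decide)⟩
  | s5 => exact absurd h (not_s5 f hf n)
  | s6a =>
    obtain ⟨h1, hq⟩ := step_single f hf (by rw [h]; rfl)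
    have e1 : g f n = chi := by simp [g, h]
    have e2 : g f (n + 1) = chi := by simp [g, h1]
    rw [e1, e2]
    exact ⟨by decide, Finset.mem_singleton_self chi, rfl⟩
  | s6b =>
    obtain ⟨h1, hq⟩ := step_single f hf (by rw [h]; rfl)
    have e1 : g f n = chi := by simp [g, h]
    have e2 : g f (n + 1) = chi := by simp [g, h1]
    rw [e1, e2]
    exact ⟨by decide, Finset.mem_singleton_self chi, rfl⟩
  | s7 =>
    obtain ⟨h1, hq⟩ := step_single f hf (by rw [h]; rfl)
    have e : n + 1 + 5 = n + 6 := by omega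
    have e1 : g f n = chi := by simp [g, h]
    by_cases hc : sAt f (n + 6) = s4
    · have e2 : g f (n + 1) = .box nuX := by simp [g, h1, e, hc]
      rw [e1, e2]
      exact ⟨by decide, Or.inl (by decide)⟩
    · have e2 : g f (n + 1) = .dia nuY := by simp [g, h1, e, hc]
      rw [e1, e2]
      exact ⟨by decide, Or.inl (by decide)⟩
  | s8 =>
    obtain ⟨h1, hq⟩ := step_single f hf (by rw [h]; rfl)
    have e : n + 1 + 4 = n + 5 := by omega
    by_cases hc : sAt f (n + 5) = s4
    · have e1 : g f n = .box nuX := by simp [g, h, hc]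
      have e2 : g f (n + 1) = nuX := by simp [g, h1, e, hc]
      rw [e1, e2]
      exact ⟨by decide, Or.inl (by decide)⟩
    · have e1 : g f n = .dia nuY := by simp [g, h, hc]
      have e2 : g f (n + 1) = nuY := by simp [g, h1, e, hc]
      rw [e1, e2]
      exact ⟨by decide, Or.inr (by decide)⟩

include hf in
lemma is_trace : deriv.IsTraceOn f 0 (g f) := by
  intro n
  rw [Nat.zero_add]
  show g f n ∈ (rl (branchNode f n)).concl ∧
    (rl (branchNode f n)).descends (f n) (g f n) (g f (n + 1))
  rw [rl_branch f hf n]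
  exact trace_main f hf n

/-! ### Reaching `s0` infinitely often -/

def dS : St → ℕ
  | s0 => 0 | s8 => 1 | s7 => 2 | s6a => 3 | s6b => 3 | s4 => 4
  | s3 => 5 | s2 => 6 | s1 => 7 | s5 => 0

include hf in
lemma dS_dec (n : ℕ) (h : sAt f n ≠ s0) : dS (sAt f (n + 1)) < dS (sAt f n) := by
  cases hs : sAt f n with
  | s0 => exact absurd hs h
  | s5 => exact absurd hs (not_s5 f hf n)
  | s1 =>
    obtain ⟨h1, -⟩ := step_single f hf (by rw [hs]; rfl); rw [h1]; decide
  | s2 =>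
    obtain ⟨h1, -⟩ := step_single f hf (by rw [hs]; rfl); rw [h1]; decide
  | s3 =>
    rcases step_pair f hf (by rw [hs]; rfl) with ⟨h1, -⟩ | ⟨h1, -⟩ <;>
      rw [h1] <;> decide
  | s4 =>
    rcases step_pair f hf (by rw [hs]; rfl) with ⟨h1, -⟩ | ⟨h1, -⟩
    · exact absurd h1 (not_s5 f hf (n + 1))
    · rw [h1]; decide
  | s6a =>
    obtain ⟨h1, -⟩ := step_single f hf (by rw [hs]; rfl); rw [h1]; decide
  | s6b =>
    obtain ⟨h1, -⟩ := step_single f hf (by rw [hs]; rfl); rw [h1]; decide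
  | s7 =>
    obtain ⟨h1, -⟩ := step_single f hf (by rw [hs]; rfl); rw [h1]; decide
  | s8 =>
    obtain ⟨h1, -⟩ := step_single f hf (by rw [hs]; rfl); rw [h1]; decide

include hf in
lemma reach_aux : ∀ k n, dS (sAt f n) ≤ k → ∃ m, n ≤ m ∧ sAt f m = s0 := by
  intro k
  induction k with
  | zero =>
    intro n hn
    by_cases h : sAt f n = s0
    · exact ⟨n, le_refl n, h⟩
    · have := dS_dec f hf n h; omega
  | succ k ih =>
    intro n hn
    by_cases h : sAt f n = s0
    · exact ⟨n, le_refl n, h⟩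
    · have hd := dS_dec f hf n h
      obtain ⟨m, hm, hs⟩ := ih (n + 1) (by omega)
      exact ⟨m, by omega, hs⟩

include hf in
lemma s0_inf (N : ℕ) : ∃ n, N ≤ n ∧ sAt f n = s0 :=
  reach_aux f hf (dS (sAt f N)) N (le_refl _)

lemma g_at_s0 {n : ℕ} (h : sAt f n = s0) : g f n = nuX ∨ g f n = nuY := by
  simp only [g, h]
  split_ifs <;> simp

end Branch

/-! ### Closure facts -/

open Relation

lemma goods :
    ∀ φ ∈ [nuX, nuY, unfX, unfY, aN, aP, chi, Formula.box nuX, Formula.dia nuY, pP],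
      φ ∈ Clos {nuX} ∧ φ ∈ Clos {nuY} := by
  have t1 : TStep nuX unfX := TStep.nu 0 phiBody
  have t2 : TStep unfX aN := by
    have e : unfX = Formula.dia aN := by rfl
    rw [e]; exact TStep.dia aN
  have t3 : TStep aN chi := TStep.andR pN chi
  have t4 : TStep chi (.box nuX) := TStep.orL _ _
  have t5 : TStep chi (.dia nuY) := TStep.orR _ _
  have t6 : TStep (Formula.box nuX) nuX := TStep.box nuX
  have t7 : TStep (Formula.dia nuY) nuY := TStep.dia nuY
  have t8 : TStep nuY unfY := by
    have e : nuY = Formula.nu 1 psiBody := by rfl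
    rw [e]; exact TStep.nu 1 psiBody
  have t9 : TStep unfY aP := by
    have e : unfY = Formula.box aP := by rfl
    rw [e]; exact TStep.box aP
  have t10 : TStep aP chi := TStep.andR pP chi
  have t11 : TStep aP pP := TStep.andL pP chi
  have rXc : ReflTransGen TStep nuX chi :=
    ((ReflTransGen.single t1).tail t2).tail t3
  have rYc : ReflTransGen TStep nuY chi :=
    ((ReflTransGen.single t8).tail t9).tail t10
  have rcX : ReflTransGen TStep chi nuX := (ReflTransGen.single t4).tail t6
  have rcY : ReflTransGen TStep chi nuY := (ReflTransGen.single t5).tail t7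
  have memX : ∀ {φ}, ReflTransGen TStep nuX φ → φ ∈ Clos {nuX} :=
    fun h => ⟨nuX, Finset.mem_singleton_self _, h⟩
  have memY : ∀ {φ}, ReflTransGen TStep nuY φ → φ ∈ Clos {nuY} :=
    fun h => ⟨nuY, Finset.mem_singleton_self _, h⟩
  have rXY : ReflTransGen TStep nuX nuY := rXc.trans rcY
  have rYX : ReflTransGen TStep nuY nuX := rYc.trans rcX
  intro φ hφ
  simp only [List.mem_cons, List.not_mem_nil, or_false] at hφ
  rcases hφ with rfl | rfl | rfl | rfl | rfl | rfl | rfl | rfl | rfl | rfl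
  · exact ⟨memX .refl, memY rYX⟩
  · exact ⟨memX rXY, memY .refl⟩
  · exact ⟨memX (.single t1), memY (rYX.tail t1)⟩
  · exact ⟨memX (rXY.tail t8), memY (.single t8)⟩
  · exact ⟨memX ((ReflTransGen.single t1).tail t2), memY ((rYX.tail t1).tail t2)⟩
  · exact ⟨memX ((rXY.tail t8).tail t9), memY ((ReflTransGen.single t8).tail t9)⟩
  · exact ⟨memX rXc, memY rYc⟩
  · exact ⟨memX (rXc.tail t4), memY (rYc.tail t4)⟩
  · exact ⟨memX (rXc.tail t5), memY (rYc.tail t5)⟩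
  · exact ⟨memX (((rXY.tail t8).tail t9).tail t11),
      memY (((ReflTransGen.single t8).tail t9).tail t11)⟩

lemma g_good (f : ℕ → ℕ) (n : ℕ) : g f n ∈ Clos {nuX} ∧ g f n ∈ Clos {nuY} := by
  have G := goods
  cases h : sAt f n <;> simp only [g, h] <;> (try split_ifs) <;>
    first
      | exact G nuX (by simp)
      | exact G nuY (by simp)
      | exact G unfX (by simp)
      | exact G unfY (by simp)
      | exact G aN (by simp)
      | exact G aP (by simp)
      | exact G chi (by simp)
      | exact G (Formula.box nuX) (by simp)
      | exact G (Formula.dia nuY) (by simp)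
      | exact G pP (by simp)

lemma nu_trace (f : ℕ → ℕ) (hf : ∀ n, (st (branchNode f n)).isSome) :
    IsNuTraceSeq (g f) := by
  by_cases hx : nuX ∈ InfOcc (g f)
  · refine ⟨0, phiBody, hx, ?_⟩
    intro ψ hψ
    obtain ⟨n, -, hn⟩ := hψ 0
    exact hn ▸ (g_good f n).1
  · have hy : nuY ∈ InfOcc (g f) := by
      simp only [InfOcc, Set.mem_setOf_eq, not_forall] at hx
      obtain ⟨N, hN⟩ := hx
      push_neg at hN
      intro M
      obtain ⟨n, hn, hs⟩ := s0_inf f hf (max N M)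
      rcases g_at_s0 f hs with h | h
      · exact absurd h (hN n (le_trans (le_max_left N M) hn))
      · exact ⟨n, le_trans (le_max_right N M) hn, h⟩
    refine ⟨1, psiBody, hy, ?_⟩
    intro ψ hψ
    obtain ⟨n, -, hn⟩ := hψ 0
    exact hn ▸ (g_good f n).2

end PhiProofConstr

/-- There exists an NW proof of the sequent Φ = {νx.φ, νy.ψ}. -/
theorem nw_proof_of_Phi : ∃ π : NWDeriv PhiSeq, π.IsProof := by
  refine ⟨PhiProofConstr.deriv, ?_⟩
  intro f hb
  have hf : ∀ n, (PhiProofConstr.st (branchNode f n)).isSome := fun n => hb n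
  exact ⟨0, PhiProofConstr.g f, PhiProofConstr.is_trace f hf,
    PhiProofConstr.nu_trace f hf⟩
end

section
/- Clo is sound: every sequent that has a Clo proof is valid. -/
set_option linter.unusedVariables false

/-!
Annotated formulas are read with widened fixpoints: the name `x'` of a `clo` rule with context
`Γ` and principal formula `νx.φ` makes every `νx.φ` carrying `x'` denote `νS. ¬Γ ∪ φ(S)`.
Under this reading a discharged assumption `Γ, (νx.φ)^{a x'}` holds outright, and the rule `clo`
is sound by coinduction: since `νx.φ` does not occur in `φ`, the premise
`¬Γ ⊆ φ[νS. ¬Γ ∪ φ(S)]` makes `νS. ¬Γ ∪ φ(S)` a post-fixpoint of `φ`, whence `¬Γ ⊆ νx.φ`.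
Freshness of `x'` keeps the reading of `Γ` unchanged, and since over a closed sequent `a ≤ x`
means that all names in `a` belong to `x`, unfolding `ηx.φ^a` commutes with the widened reading.
Induction over the finite proof, from the leaves down, then gives soundness.
-/

namespace Formula

theorem freeVars_subst_subset (φ : Formula) (x : ℕ) (ψ : Formula) :
    (φ.subst x ψ).freeVars ⊆ φ.freeVars.erase x ∪ ψ.freeVars := by
  intro y hy
  induction φ with
  | prop | nprop => simp [subst, freeVars] at hy
  | var z => by_cases hz : z = x <;> simp_all [subst, freeVars]
  | or a b iha ihb | and a b iha ihb =>
    simp only [subst, freeVars, Finset.mem_union, Finset.mem_erase] at hy iha ihb ⊢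
    grind
  | dia a ih | box a ih => exact ih hy
  | mu z a ih | nu z a ih =>
    by_cases hz : z = x
    · simp_all [subst, freeVars]
    · simp only [subst, hz, if_false, freeVars, Finset.mem_union, Finset.mem_erase] at hy ih ⊢
      grind

theorem Closed.unfoldEta {b : Bool} {x : ℕ} {φ : Formula} (h : (eta b x φ).Closed) :
    (unfoldEta b x φ).Closed := by
  have hfv : (eta b x φ).freeVars = φ.freeVars.erase x := by cases b <;> rfl
  have hsub := freeVars_subst_subset φ x (eta b x φ)
  rw [hfv, ← hfv, h, Finset.union_empty] at hsub
  rw [Closed, ← Finset.subset_empty]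
  cases b <;> exact hsub

theorem Closed.unfoldNu {x : ℕ} {φ : Formula} (h : (nu x φ).Closed) : (unfoldNu x φ).Closed :=
  Closed.unfoldEta (b := true) h

@[simp] theorem closed_or {φ ψ : Formula} : (or φ ψ).Closed ↔ φ.Closed ∧ ψ.Closed := by
  simp [Closed, freeVars]

@[simp] theorem closed_and {φ ψ : Formula} : (and φ ψ).Closed ↔ φ.Closed ∧ ψ.Closed := by
  simp [Closed, freeVars]

end Formula

theorem TStep.closed {φ ψ : Formula} (h : TStep φ ψ) (hφ : φ.Closed) : ψ.Closed := by
  cases h with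
  | orL => exact (Formula.closed_or.1 hφ).1
  | orR => exact (Formula.closed_or.1 hφ).2
  | andL => exact (Formula.closed_and.1 hφ).1
  | andR => exact (Formula.closed_and.1 hφ).2
  | dia | box => exact hφ
  | mu => exact Formula.Closed.unfoldEta (b := false) hφ
  | nu => exact Formula.Closed.unfoldNu hφ

theorem ClosedSeq.closed_of_mem_clos {Γ : Sequent} (hΓ : ClosedSeq Γ) {ψ : Formula}
    (h : ψ ∈ Clos Γ) : ψ.Closed := by
  obtain ⟨φ, hφ, hrt⟩ := h
  induction hrt with
  | refl => exact hΓ φ hφ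
  | tail _ hstep ih => exact hstep.closed ih

theorem AnnLe.fst_eq {Γ : Sequent} (hΓ : ClosedSeq Γ) {a : Ann} {x : ℕ} (h : AnnLe Γ a x) :
    ∀ n ∈ a, n.1 = x := fun n hn => by
  obtain h | ⟨b, φ, hmem, hfree⟩ := h n hn
  · exact h
  · simp [show (Formula.eta b x φ).freeVars = ∅ from hΓ.closed_of_mem_clos hmem] at hfree

theorem stripSeq_annSeq (Γ : Sequent) : stripSeq (annSeq Γ) = Γ := by
  simp [stripSeq, annSeq, Finset.image_image, Function.comp_def]

theorem CloRule.prems_closed {r : CloRule} (hcut : ¬ r.IsCut) (h : ∀ p ∈ r.concl, p.1.Closed) :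
    ∀ Δ ∈ r.prems, ∀ p ∈ Δ, p.1.Closed := by
  cases r
  case cut => exact absurd trivial hcut
  all_goals simp only [CloRule.prems, CloRule.concl, List.mem_cons, List.not_mem_nil, or_false,
    forall_eq_or_imp, forall_eq, Finset.forall_mem_insert, IsEmpty.forall_iff, implies_true] at h ⊢
  case orR => exact ⟨(Formula.closed_or.1 h.1).1, (Formula.closed_or.1 h.1).2, h.2⟩
  case andR => exact ⟨⟨(Formula.closed_and.1 h.1).1, h.2⟩, (Formula.closed_and.1 h.1).2, h.2⟩
  case weak => exact h.2
  case boxR => exact ⟨h.1, fun p hp => h.2 (.dia p.1, p.2) (Finset.mem_image_of_mem _ hp)⟩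
  case unfold => exact ⟨h.1.unfoldEta, h.2⟩
  case exp =>
    intro p hp
    obtain ⟨t, ht, rfl⟩ := List.mem_map.1 (List.mem_toFinset.1 hp)
    exact h (t.1, t.2.2) (List.mem_toFinset.2 (List.mem_map_of_mem ht))
  case clo => exact ⟨h.1.unfoldNu, h.2⟩

theorem CloDeriv.label_closed {Δ₀ : ASequent} (ρ : CloDeriv false Δ₀)
    (h₀ : ∀ p ∈ Δ₀, p.1.Closed) : ∀ u ∈ ρ.tree, ∀ p ∈ ρ.label u, p.1.Closed := by
  intro u
  induction u using List.reverseRecOn with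
  | nil => exact fun _ => by rwa [ρ.label_root]
  | append_singleton u n ih =>
    intro hun
    have hu := ρ.prefix_closed u n hun
    have hn := (ρ.child_iff u hu n).1 hun
    have hcut : ¬ (ρ.rule u).IsCut := fun h => Bool.false_ne_true (ρ.cut_ok u hu h)
    rw [ρ.label_child u hu n hn]
    exact CloRule.prems_closed hcut (ρ.label_concl u hu ▸ ih hu) _ (List.get_mem _ _)

section EscapeSemantics

variable {W : Type} (M : Kripke W)

/-- The semantics in which each `νx.φ` is read as `νS. E x φ ∪ φ(S)`: the sets `E x φ` are the
states at which a discharged assumption on `νx.φ` may be used. -/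
def semEsc (E : ℕ → Formula → Set W) : Formula → (ℕ → Set W) → Set W
  | .prop p, _ => {w | M.val p w}
  | .nprop p, _ => {w | ¬ M.val p w}
  | .var x, env => env x
  | .or a b, env => semEsc E a env ∪ semEsc E b env
  | .and a b, env => semEsc E a env ∩ semEsc E b env
  | .dia a, env => {w | ∃ v, M.rel w v ∧ v ∈ semEsc E a env}
  | .box a, env => {w | ∀ v, M.rel w v → v ∈ semEsc E a env}
  | .mu x a, env => ⋂₀ {S | semEsc E a (Function.update env x S) ⊆ S}
  | .nu x a, env => ⋃₀ {S | S ⊆ E x a ∪ semEsc E a (Function.update env x S)}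

variable {M}

theorem semEsc_empty (φ : Formula) (env : ℕ → Set W) :
    semEsc M (fun _ _ => ∅) φ env = sem M φ env := by
  induction φ generalizing env <;> simp_all [semEsc, sem]

/-- Escape sets are only consulted at bodies of `ν`-subformulas, which are smaller than the
formula. -/
theorem semEsc_mono {E E' : ℕ → Formula → Set W} {φ : Formula} {env env' : ℕ → Set W}
    (hE : ∀ y ψ, sizeOf ψ < sizeOf φ → E y ψ ⊆ E' y ψ) (henv : env ≤ env') :
    semEsc M E φ env ⊆ semEsc M E' φ env' := by
  induction φ generalizing env env' with
  | prop | nprop => exact subset_rfl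
  | var x => exact henv x
  | or a b iha ihb =>
    exact Set.union_subset_union (iha (fun y ψ h => hE y ψ (by simp at h ⊢; omega)) henv)
      (ihb (fun y ψ h => hE y ψ (by simp at h ⊢; omega)) henv)
  | and a b iha ihb =>
    exact Set.inter_subset_inter (iha (fun y ψ h => hE y ψ (by simp at h ⊢; omega)) henv)
      (ihb (fun y ψ h => hE y ψ (by simp at h ⊢; omega)) henv)
  | dia a ih =>
    rintro w ⟨v, hwv, hv⟩
    exact ⟨v, hwv, ih (fun y ψ h => hE y ψ (by simp at h ⊢; omega)) henv hv⟩
  | box a ih =>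
    exact fun w hw v hwv => ih (fun y ψ h => hE y ψ (by simp at h ⊢; omega)) henv (hw v hwv)
  | mu x a ih =>
    refine fun w hw S hS => hw S ?_
    exact subset_trans (ih (fun y ψ h => hE y ψ (by simp at h ⊢; omega))
      (update_le_update_iff.2 ⟨le_rfl, fun y _ => henv y⟩)) hS
  | nu x a ih =>
    rintro w ⟨S, hS, hw⟩
    refine ⟨S, subset_trans hS (Set.union_subset_union (hE x a (by simp)) ?_), hw⟩
    exact ih (fun y ψ h => hE y ψ (by simp at h ⊢; omega)) (update_le_update_iff.2
      ⟨le_rfl, fun y _ => henv y⟩)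

theorem semEsc_mono_env (E : ℕ → Formula → Set W) (φ : Formula) {env env' : ℕ → Set W}
    (henv : env ≤ env') : semEsc M E φ env ⊆ semEsc M E φ env' :=
  semEsc_mono (fun _ _ _ => subset_rfl) henv

theorem semEsc_mono_esc {E E' : ℕ → Formula → Set W} (hE : E ≤ E') (φ : Formula)
    (env : ℕ → Set W) : semEsc M E φ env ⊆ semEsc M E' φ env :=
  semEsc_mono (fun y ψ _ => hE y ψ) le_rfl

theorem semEsc_congr_env (E : ℕ → Formula → Set W) {φ : Formula} {env env' : ℕ → Set W}
    (h : ∀ y ∈ φ.freeVars, env y = env' y) : semEsc M E φ env = semEsc M E φ env' := by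
  induction φ generalizing env env' with
  | prop | nprop => rfl
  | var x => exact h x (by simp [Formula.freeVars])
  | or a b iha ihb | and a b iha ihb =>
    simp only [Formula.freeVars, Finset.mem_union] at h
    simp only [semEsc, iha fun y hy => h y (.inl hy), ihb fun y hy => h y (.inr hy)]
  | dia a ih | box a ih => simp only [semEsc, ih h]
  | mu x a ih | nu x a ih =>
    have key : ∀ S, semEsc M E a (Function.update env x S)
        = semEsc M E a (Function.update env' x S) := fun S => ih fun y hy => by
      by_cases hyx : y = x
      · simp [hyx]
      · simpa [hyx] using h y (by simp [Formula.freeVars, hyx, hy])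
    simp only [semEsc, key]

theorem semEsc_closed (E : ℕ → Formula → Set W) {φ : Formula} (hφ : φ.Closed)
    (env env' : ℕ → Set W) : semEsc M E φ env = semEsc M E φ env' :=
  semEsc_congr_env E fun y hy => by simp [show φ.freeVars = ∅ from hφ] at hy

theorem semEsc_nu_eq (E : ℕ → Formula → Set W) (x : ℕ) (a : Formula) (env : ℕ → Set W) :
    semEsc M E (.nu x a) env
      = E x a ∪ semEsc M E a (Function.update env x (semEsc M E (.nu x a) env)) :=
  let f : Set W →o Set W := ⟨fun S => E x a ∪ semEsc M E a (Function.update env x S),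
    fun _ _ h => Set.union_subset_union_right _ (semEsc_mono_env E a (update_le_update_iff'.2 h))⟩
  f.map_gfp.symm

theorem subset_semEsc_nu {E : ℕ → Formula → Set W} {x : ℕ} {a : Formula} {env : ℕ → Set W}
    {S : Set W} (h : S ⊆ E x a ∪ semEsc M E a (Function.update env x S)) :
    S ⊆ semEsc M E (.nu x a) env :=
  Set.subset_sUnion_of_mem h

theorem semEsc_mu_unfold_subset (E : ℕ → Formula → Set W) (x : ℕ) (a : Formula)
    (env : ℕ → Set W) :
    semEsc M E a (Function.update env x (semEsc M E (.mu x a) env)) ⊆ semEsc M E (.mu x a) env :=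
  let f : Set W →o Set W := ⟨fun S => semEsc M E a (Function.update env x S),
    fun _ _ h => semEsc_mono_env E a (update_le_update_iff'.2 h)⟩
  f.map_lfp.le

/-- Substituting for `x` changes the bodies of the `ν y`-subformulas with `y ≠ x`, hence
their escape sets must vanish. -/
theorem semEsc_subst {E : ℕ → Formula → Set W} {x : ℕ} (hE : ∀ y ≠ x, ∀ ψ, E y ψ = ∅)
    {Θ : Formula} (hΘ : Θ.Closed) (φ : Formula) (env : ℕ → Set W) :
    semEsc M E (φ.subst x Θ) env
      = semEsc M E φ (Function.update env x (semEsc M E Θ env)) := by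
  induction φ generalizing env with
  | prop | nprop => rfl
  | var y => by_cases hy : y = x <;> simp [Formula.subst, semEsc, hy]
  | or a b iha ihb | and a b iha ihb => simp only [Formula.subst, semEsc, iha, ihb]
  | dia a ih | box a ih => simp only [Formula.subst, semEsc, ih]
  | mu y a ih | nu y a ih =>
    by_cases hy : y = x
    · subst hy
      simp only [Formula.subst, if_true]
      refine semEsc_congr_env E fun z hz => ?_
      simp_all [Formula.freeVars]
    · have key : ∀ S, semEsc M E (a.subst x Θ) (Function.update env y S)
          = semEsc M E a (Function.update (Function.update env x (semEsc M E Θ env)) y S) :=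
        fun S => by
          rw [ih, semEsc_closed E hΘ _ env, Function.update_comm hy]
      simp only [Formula.subst, hy, if_false, semEsc, key, hE y hy]

theorem semEsc_unfold_subset {E : ℕ → Formula → Set W} {x : ℕ} (hE : ∀ y ≠ x, ∀ ψ, E y ψ = ∅)
    {b : Bool} {φ : Formula} (hcl : (Formula.eta b x φ).Closed) (env : ℕ → Set W) :
    semEsc M E (Formula.unfoldEta b x φ) env ⊆ semEsc M E (Formula.eta b x φ) env := by
  cases b <;> simp only [Formula.eta, Formula.unfoldEta, Formula.unfoldMu, Formula.unfoldNu,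
    Bool.false_eq_true, if_true, if_false] at hcl ⊢ <;> rw [semEsc_subst hE hcl]
  · exact semEsc_mu_unfold_subset E x φ env
  · conv_rhs => rw [semEsc_nu_eq]
    exact Set.subset_union_right

theorem semEsc_clo {E E' : ℕ → Formula → Set W} {x : ℕ} {φ : Formula} {G : Set W}
    {env : ℕ → Set W} (hE' : ∀ y ≠ x, ∀ ψ, E' y ψ = ∅) (hcl : (Formula.nu x φ).Closed)
    (hφ : E' x φ ⊆ E x φ ∪ G) (hne : ∀ y ψ, ψ ≠ φ → E' y ψ ⊆ E y ψ)
    (hG : G ⊆ semEsc M E' (Formula.unfoldNu x φ) env) :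
    G ⊆ semEsc M E (Formula.nu x φ) env := by
  set N := semEsc M E' (Formula.nu x φ) env
  have hG' : G ⊆ semEsc M E' φ (Function.update env x N) := by
    rwa [Formula.unfoldNu, semEsc_subst hE' hcl] at hG
  have hbody : semEsc M E' φ (Function.update env x N) ⊆ semEsc M E φ (Function.update env x N) :=
    semEsc_mono (fun y ψ h => hne y ψ (ne_of_apply_ne sizeOf h.ne)) le_rfl
  have hfix : N = E' x φ ∪ semEsc M E' φ (Function.update env x N) := semEsc_nu_eq E' x φ env
  refine (hG'.trans (hfix ▸ Set.subset_union_right)).trans (subset_semEsc_nu ?_)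
  calc N = E' x φ ∪ semEsc M E' φ (Function.update env x N) := hfix
    _ ⊆ E x φ ∪ G ∪ semEsc M E φ (Function.update env x N) := Set.union_subset_union hφ hbody
    _ ⊆ E x φ ∪ semEsc M E φ (Function.update env x N) := by
      rw [Set.union_assoc, Set.union_eq_self_of_subset_left (hG'.trans hbody)]

end EscapeSemantics

section AnnotatedSemantics

variable {W : Type} (M : Kripke W) (env : ℕ → Set W)

/-- A name `n ∈ N_x` contributes the escape set `τ n φ` to each formula `νx.φ`. -/
def escape (τ : Name → Formula → Set W) (a : Ann) : ℕ → Formula → Set W :=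
  fun x φ => {w | ∃ n ∈ a, n.1 = x ∧ w ∈ τ n φ}

def AHolds (τ : Name → Formula → Set W) (Δ : ASequent) (w : W) : Prop :=
  ∃ p ∈ Δ, w ∈ semEsc M (escape τ p.2) p.1 env

def AValid (τ : Name → Formula → Set W) (Δ : ASequent) : Prop := ∀ w, AHolds M env τ Δ w

def cloEscape (τ : Name → Formula → Set W) (Γ : ASequent) (φ : Formula) : Formula → Set W :=
  fun ψ => if ψ = φ then {w | ¬ AHolds M env τ Γ w} else ∅

variable {M env} {τ τ' : Name → Formula → Set W}

theorem escape_mono (h : τ ≤ τ') (a : Ann) : escape τ a ≤ escape τ' a :=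
  fun _ _ _ ⟨n, hn, hx, hw⟩ => ⟨n, hn, hx, h n _ hw⟩

theorem escape_mono_right {a b : Ann} (h : a.Sublist b) : escape τ a ≤ escape τ b :=
  fun _ _ _ ⟨n, hn, hx, hw⟩ => ⟨n, h.subset hn, hx, hw⟩

theorem escape_nil : escape τ [] = fun _ _ => ∅ := by
  ext
  simp [escape]

theorem escape_eq_empty {a : Ann} {x : ℕ} (ha : ∀ n ∈ a, n.1 = x) :
    ∀ y ≠ x, ∀ ψ, escape τ a y ψ = ∅ := by
  rintro y hy ψ
  exact Set.eq_empty_iff_forall_notMem.2 fun w ⟨n, hn, hny, _⟩ => hy (hny ▸ ha n hn)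

theorem escape_update_of_notMem {a : Ann} {x' : Name} (h : x' ∉ a) (T : Formula → Set W) :
    escape (Function.update τ x' T) a = escape τ a := by
  ext y ψ w
  refine exists_congr fun n => and_congr_right fun hn => ?_
  rw [Function.update_of_ne (ne_of_mem_of_not_mem hn h)]

@[simp]
theorem aholds_insert (p : AFormula) (Δ : ASequent) (w : W) :
    AHolds M env τ (insert p Δ) w ↔ w ∈ semEsc M (escape τ p.2) p.1 env ∨ AHolds M env τ Δ w :=
  Finset.exists_mem_insert _ _ _

theorem AHolds.mono (h : τ ≤ τ') {Δ : ASequent} {w : W} :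
    AHolds M env τ Δ w → AHolds M env τ' Δ w :=
  fun ⟨p, hp, hw⟩ => ⟨p, hp, semEsc_mono_esc (escape_mono h p.2) p.1 env hw⟩

theorem aholds_update_of_fresh {x' : Name} {Δ : ASequent} (h : NameFresh x' Δ)
    (T : Formula → Set W) (w : W) :
    AHolds M env (Function.update τ x' T) Δ w ↔ AHolds M env τ Δ w := by
  refine exists_congr fun p => and_congr_right fun hp => ?_
  rw [escape_update_of_notMem (h p hp)]

theorem avalid_ax (τ : Name → Formula → Set W) (p : ℕ) :
    AValid M env τ {(.prop p, []), (.nprop p, [])} := fun w => by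
  by_cases hp : M.val p w <;> simp [AHolds, semEsc, hp]

theorem AValid.or {Γ : ASequent} {φ ψ : Formula} {a : Ann}
    (h : AValid M env τ (insert (φ, a) (insert (ψ, a) Γ))) :
    AValid M env τ (insert (.or φ ψ, a) Γ) := fun w => by
  simpa [semEsc, or_assoc] using h w

theorem AValid.and {Γ : ASequent} {φ ψ : Formula} {a : Ann}
    (hφ : AValid M env τ (insert (φ, a) Γ)) (hψ : AValid M env τ (insert (ψ, a) Γ)) :
    AValid M env τ (insert (.and φ ψ, a) Γ) := fun w => by
  refine (aholds_insert _ _ w).2 (or_iff_not_imp_right.2 fun hw => ?_)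
  exact ⟨((aholds_insert _ _ w).1 (hφ w)).resolve_right hw,
    ((aholds_insert _ _ w).1 (hψ w)).resolve_right hw⟩

theorem AValid.weaken {Γ : ASequent} (p : AFormula) (h : AValid M env τ Γ) :
    AValid M env τ (insert p Γ) :=
  fun w => (aholds_insert p Γ w).2 (.inr (h w))

theorem AValid.box {Γ : ASequent} {φ : Formula} {a : Ann} (h : AValid M env τ (insert (φ, a) Γ)) :
    AValid M env τ (insert (.box φ, a) (Γ.image fun q => (.dia q.1, q.2))) := fun w => by
  by_cases hbox : ∀ v, M.rel w v → v ∈ semEsc M (escape τ a) φ env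
  · exact (aholds_insert _ _ w).2 (.inl hbox)
  push Not at hbox
  obtain ⟨v, hwv, hv⟩ := hbox
  obtain ⟨q, hq, hvq⟩ := ((aholds_insert _ _ v).1 (h v)).resolve_left hv
  exact (aholds_insert _ _ w).2 (.inr ⟨_, Finset.mem_image_of_mem _ hq, v, hwv, hvq⟩)

theorem AValid.unfold {Γ : ASequent} {b : Bool} {x : ℕ} {φ : Formula} {a : Ann}
    (ha : ∀ n ∈ a, n.1 = x) (hcl : (Formula.eta b x φ).Closed)
    (h : AValid M env τ (insert (Formula.unfoldEta b x φ, a) Γ)) :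
    AValid M env τ (insert (Formula.eta b x φ, a) Γ) := fun w =>
  (aholds_insert _ _ w).2 <| ((aholds_insert _ _ w).1 (h w)).imp_left
    fun hw => semEsc_unfold_subset (escape_eq_empty ha) hcl env hw

theorem AValid.exp {l : List (Formula × Ann × Ann)} (hl : ∀ t ∈ l, t.2.1.Sublist t.2.2)
    (h : AValid M env τ (l.map fun t => (t.1, t.2.1)).toFinset) :
    AValid M env τ (l.map fun t => (t.1, t.2.2)).toFinset := fun w => by
  obtain ⟨p, hp, hw⟩ := h w
  obtain ⟨t, ht, rfl⟩ := List.mem_map.1 (List.mem_toFinset.1 hp)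
  exact ⟨(t.1, t.2.2), List.mem_toFinset.2 (List.mem_map_of_mem ht),
    semEsc_mono_esc (escape_mono_right (hl t ht)) t.1 env hw⟩

theorem AValid.asm {Γ : ASequent} {x : ℕ} {φ : Formula} {a : Ann} {x' : Name} (hx' : x'.1 = x)
    (h : ∀ w, ¬ AHolds M env τ Γ w → w ∈ τ x' φ) :
    AValid M env τ (insert (.nu x φ, a ++ [x']) Γ) := fun w => by
  refine (aholds_insert _ _ w).2 (or_iff_not_imp_right.2 fun hw => ?_)
  rw [semEsc_nu_eq]
  exact .inl ⟨x', by simp, hx', h w hw⟩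

theorem AValid.clo {Γ : ASequent} {x : ℕ} {φ : Formula} {a : Ann} {x' : Name}
    (ha : ∀ n ∈ a, n.1 = x) (hx' : x'.1 = x) (hfresh : NameFresh x' Γ)
    (hcl : (Formula.nu x φ).Closed)
    (h : AValid M env (Function.update τ x' (cloEscape M env τ Γ φ))
      (insert (Formula.unfoldNu x φ, a ++ [x']) Γ)) :
    AValid M env τ (insert (.nu x φ, a) Γ) := fun w => by
  set τ' := Function.update τ x' (cloEscape M env τ Γ φ)
  have hτ' : ∀ n ≠ x', τ' n = τ n := fun n hn => Function.update_of_ne hn _ _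
  have hG : {w | ¬ AHolds M env τ Γ w}
      ⊆ semEsc M (escape τ' (a ++ [x'])) (Formula.unfoldNu x φ) env := fun v hv =>
    ((aholds_insert _ _ v).1 (h v)).resolve_right
      fun hv' => hv ((aholds_update_of_fresh hfresh _ v).1 hv')
  refine (aholds_insert _ _ w).2 (or_iff_not_imp_right.2 fun hw => semEsc_clo ?_ hcl ?_ ?_ hG hw)
  · exact escape_eq_empty fun n hn => by
      rcases List.mem_append.1 hn with hn | hn
      · exact ha n hn
      · simpa [List.mem_singleton.1 hn] using hx'
  · rintro v ⟨n, hn, hnx, hv⟩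
    by_cases hnx' : n = x'
    · subst hnx'
      simpa [τ', cloEscape] using Or.inr hv
    · exact .inl ⟨n, by simpa [hnx'] using hn, hnx, hτ' n hnx' ▸ hv⟩
  · rintro y ψ hψ v ⟨n, hn, hny, hv⟩
    by_cases hnx' : n = x'
    · subst hnx'
      simp [τ', cloEscape, hψ] at hv
    · exact ⟨n, by simpa [hnx'] using hn, hny, hτ' n hnx' ▸ hv⟩

end AnnotatedSemantics

theorem List.IsPrefix.ne_concat {α : Type*} {v u : List α} (h : v <+: u) (n : α) :
    v ≠ u ++ [n] := fun e => by
  simpa [e] using h.length_le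

theorem finite_tree_induction {α : Type*} {T : Set (List α)} (hT : T.Finite) {P : List α → Prop}
    (h : ∀ u ∈ T, (∀ n, u ++ [n] ∈ T → P (u ++ [n])) → P u) : ∀ u ∈ T, P u := by
  obtain ⟨N, hN⟩ := (hT.image List.length).bddAbove
  have hlen : ∀ u ∈ T, u.length ≤ N := fun u hu => hN ⟨u, hu, rfl⟩
  suffices ∀ k, ∀ u ∈ T, N - u.length ≤ k → P u from fun u hu => this _ u hu le_rfl
  intro k
  induction k with
  | zero =>
    refine fun u hu hk => h u hu fun n hn => absurd (hlen _ hn) ?_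
    simp only [List.length_append, List.length_singleton]
    omega
  | succ k ih =>
    refine fun u hu hk => h u hu fun n hn => ih _ hn ?_
    simp only [List.length_append, List.length_singleton]
    omega

namespace CloDeriv

variable {c : Bool} {Δ₀ : ASequent}

theorem child_of_rule (ρ : CloDeriv c Δ₀) {u : List ℕ} (hu : u ∈ ρ.tree) {r : CloRule}
    (hr : ρ.rule u = r) {n : ℕ} (hn : n < r.prems.length) :
    u ++ [n] ∈ ρ.tree ∧ ρ.label (u ++ [n]) = r.prems.get ⟨n, hn⟩ := by
  subst hr
  exact ⟨(ρ.child_iff u hu n).2 hn, ρ.label_child u hu n hn⟩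

variable {W : Type} (M : Kripke W) (env : ℕ → Set W)

/-- `support` makes the name of a new `clo` rule have an empty escape set (token uniqueness),
so that extending `τ` by it is monotone. -/
structure Coherent (ρ : CloDeriv c Δ₀) (u : List ℕ) (τ : Name → Formula → Set W) : Prop where
  support : ∀ n, τ n ≠ ⊥ → ∃ v ∈ ρ.tree, v <+: u ∧ v ≠ u ∧ (ρ.rule v).cloToken = some n
  discharge : ∀ v Γ x φ a x', v <+: u → v ≠ u → ρ.rule v = .clo Γ x φ a x' →
    ∀ w, ¬ AHolds M env τ Γ w → w ∈ τ x' φ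

variable {M env} {ρ : CloDeriv c Δ₀} {u : List ℕ} {τ : Name → Formula → Set W}

theorem coherent_root : Coherent M env ρ [] ⊥ where
  support _ h := absurd rfl h
  discharge _ _ _ _ _ _ hv hne := absurd (List.prefix_nil.1 hv) hne

theorem Coherent.child (hτ : Coherent M env ρ u τ) (hr : (ρ.rule u).cloToken = none) (n : ℕ) :
    Coherent M env ρ (u ++ [n]) τ where
  support m hm := by
    obtain ⟨v, hv, hvu, -, hvm⟩ := hτ.support m hm
    exact ⟨v, hv, hvu.trans (List.prefix_append u [n]), hvu.ne_concat n, hvm⟩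
  discharge v Γ x φ a x' hv hne hrv := by
    have hvu : v ≠ u := by
      rintro rfl
      simp [hrv, CloRule.cloToken] at hr
    exact hτ.discharge v Γ x φ a x' ((List.prefix_concat_iff.1 hv).resolve_left hne) hvu hrv

theorem Coherent.clo_child (hτ : Coherent M env ρ u τ) (hu : u ∈ ρ.tree) {Γ : ASequent} {x : ℕ}
    {φ : Formula} {a : Ann} {x' : Name} (hr : ρ.rule u = .clo Γ x φ a x') :
    Coherent M env ρ (u ++ [0]) (Function.update τ x' (cloEscape M env τ Γ φ)) := by
  have hx' : τ x' = ⊥ := by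
    by_contra h
    obtain ⟨v, hv, -, hvu, hvx'⟩ := hτ.support x' h
    exact hvu (ρ.token_unique v hv u hu x' hvx' (by simp [hr, CloRule.cloToken]))
  have hle : τ ≤ Function.update τ x' (cloEscape M env τ Γ φ) := by
    intro n
    by_cases hn : n = x'
    · subst hn
      simp [hx']
    · simp [hn]
  constructor
  · intro n hn
    by_cases hnx' : n = x'
    · exact ⟨u, hu, List.prefix_append u [0], (List.prefix_refl u).ne_concat 0,
        by simp [hr, CloRule.cloToken, hnx']⟩
    · obtain ⟨v, hv, hvu, -, hvn⟩ := hτ.support n (by simpa [hnx'] using hn)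
      exact ⟨v, hv, hvu.trans (List.prefix_append u [0]), hvu.ne_concat 0, hvn⟩
  · intro v Γv xv φv av xv' hv hne hrv w hw
    have hw' : ¬ AHolds M env τ Γv w := fun h => hw (h.mono hle)
    have hvu' : v <+: u := (List.prefix_concat_iff.1 hv).resolve_left hne
    obtain rfl | hvu := eq_or_ne v u
    · obtain ⟨rfl, -, rfl, -, rfl⟩ : Γv = Γ ∧ xv = x ∧ φv = φ ∧ av = a ∧ xv' = x' := by
        simpa [hr] using hrv.symm
      simpa [cloEscape] using hw'
    · exact hle xv' φv (hτ.discharge v Γv xv φv av xv' hvu' hvu hrv w hw')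

end CloDeriv

theorem CloRule.avalid_concl {W : Type} {M : Kripke W} {env : ℕ → Set W}
    {τ : Name → Formula → Set W} {Γ : Sequent} (hΓ : ClosedSeq Γ) {r : CloRule} (hok : r.Ok Γ)
    (hcl : ∀ p ∈ r.concl, p.1.Closed) (hclo : r.cloToken = none) (hasm : ¬ r.IsAsm)
    (hcut : ¬ r.IsCut) (h : ∀ Δ ∈ r.prems, AValid M env τ Δ) : AValid M env τ r.concl := by
  cases r with
  | ax p => exact avalid_ax τ p
  | orR => exact (h _ (by simp [prems])).or
  | andR => exact (h _ (by simp [prems])).and (h _ (by simp [prems]))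
  | weak => exact (h _ (by simp [prems])).weaken _
  | boxR => exact (h _ (by simp [prems])).box
  | unfold Γc b x φ a =>
    exact (h _ (by simp [prems])).unfold (hok.fst_eq hΓ)
      (hcl (.eta b x φ, a) (Finset.mem_insert_self _ _))
  | exp => exact (h _ (by simp [prems])).exp hok
  | clo => simp [cloToken] at hclo
  | asm => exact absurd trivial hasm
  | cut => exact absurd trivial hcut

theorem CloDeriv.avalid_of_coherent {W : Type} (M : Kripke W) (env : ℕ → Set W) {Γ : Sequent}
    (hΓ : ClosedSeq Γ) (ρ : CloDeriv false (annSeq Γ)) (hfin : ρ.tree.Finite) :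
    ∀ u ∈ ρ.tree, ∀ τ, Coherent M env ρ u τ → AValid M env τ (ρ.label u) := by
  refine finite_tree_induction hfin fun u hu ih τ hτ => ?_
  have hok := ρ.ok u hu
  rw [stripSeq_annSeq] at hok
  have hcl : ∀ p ∈ (ρ.rule u).concl, p.1.Closed := by
    rw [← ρ.label_concl u hu]
    refine ρ.label_closed (fun p hp => ?_) u hu
    obtain ⟨φ, hφ, rfl⟩ := Finset.mem_image.1 hp
    exact hΓ φ hφ
  rw [ρ.label_concl u hu]
  by_cases hstd : (ρ.rule u).cloToken = none ∧ ¬ (ρ.rule u).IsAsm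
  · refine CloRule.avalid_concl hΓ hok hcl hstd.1 hstd.2
      (fun h => Bool.false_ne_true (ρ.cut_ok u hu h)) fun Δ hΔ => ?_
    obtain ⟨⟨n, hn⟩, rfl⟩ := List.get_of_mem hΔ
    rw [← ρ.label_child u hu n hn]
    exact ih n ((ρ.child_iff u hu n).2 hn) τ (hτ.child hstd.1 n)
  cases hr : ρ.rule u with
  | asm Γc x φ a x' =>
    rw [hr] at hok
    obtain ⟨v, hvu, hne, -, hv⟩ := ρ.discharged u hu _ _ _ _ _ hr
    exact AValid.asm hok (hτ.discharge v _ _ _ _ _ hvu hne hv)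
  | clo Γc x φ a x' =>
    rw [hr] at hok hcl
    obtain ⟨hch, hlab⟩ := ρ.child_of_rule hu hr (n := 0) (by simp [CloRule.prems])
    have := ih 0 hch _ (hτ.clo_child hu hr)
    rw [hlab] at this
    exact AValid.clo (hok.2.1.fst_eq hΓ) hok.1 hok.2.2 (hcl _ (Finset.mem_insert_self _ _)) this
  | _ => simp [hr, CloRule.cloToken, CloRule.IsAsm] at hstd

/-- Clo is sound: every sequent that has a Clo proof is valid. -/
theorem clo_sound (Γ : Sequent) (hΓ : ClosedSeq Γ)
    (hprov : ∃ ρ : CloDeriv false (annSeq Γ), ρ.tree.Finite) :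
    ValidSeq Γ := by
  intro W M env w
  obtain ⟨ρ, hfin⟩ := hprov
  have := ρ.avalid_of_coherent M env hΓ hfin [] ρ.root_mem ⊥ CloDeriv.coherent_root w
  rw [ρ.label_root] at this
  obtain ⟨_, hp, hw⟩ := this
  obtain ⟨φ, hφ, rfl⟩ := Finset.mem_image.1 hp
  refine ⟨φ, hφ, ?_⟩
  rwa [escape_nil, semEsc_empty] at hw
end
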